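/- For any connected graphs G₁ and G₂, pd(G₁ × G₂) ≤ dim(G₁) + dim(G₂) + 1. -/

import Mathlib

open SimpleGraph

/-- Distance from a vertex to a set of vertices: `min {d(v,x) : x ∈ P}`. -/
noncomputable def distToSet {V : Type*} (G : SimpleGraph V) (v : V) (P : Set V) : ℕ :=
  sInf ((G.dist v) '' P)

/-- `S` is a resolving set of `G`. -/
def IsResolvingSet {V : Type*} (G : SimpleGraph V) (S : Set V) : Prop :=
  ∀ u v : V, u ≠ v → ∃ w ∈ S, G.dist u w ≠ G.dist v w

/-- The metric dimension of `G`. -/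
noncomputable def metricDim {V : Type*} (G : SimpleGraph V) : ℕ :=
  sInf {n | ∃ S : Finset V, S.card = n ∧ IsResolvingSet G ↑S}

/-- `Π` is a resolving partition of `G`: a partition of the vertex set such that
distinct vertices have distinct vectors of distances to the parts. -/
def IsResolvingPartition {V : Type*} (G : SimpleGraph V) (Pi : Set (Set V)) : Prop :=
  Setoid.IsPartition Pi ∧
    ∀ u v : V, u ≠ v → ∃ P ∈ Pi, distToSet G u P ≠ distToSet G v P

/-- The partition dimension of `G`. -/
noncomputable def partitionDim {V : Type*} (G : SimpleGraph V) : ℕ :=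
  sInf {n | ∃ Pi : Finset (Set V), Pi.card = n ∧ IsResolvingPartition G ↑Pi}

/-!
Take metric bases `S₁` of `G₁` and `S₂` of `G₂`; a metric basis of a connected graph misses some
vertex, so `S₁ᶜ` is nonempty. Partition `V₁ × V₂` into the columns `{s} × V₂` (`s ∈ S₁`), the
pieces `S₁ᶜ × {t}` (`t ∈ S₂`) and the remainder `S₁ᶜ × S₂ᶜ`. Distances in the box product add
coordinatewise, so `(p, q)` is at distance `d(p, s)` from the column of `s` and at distance
`d(p, S₁ᶜ) + d(q, t)` from the piece of `t`. Hence the columns separate vertices with different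
first coordinates, and the pieces separate those with equal first coordinates.
-/

namespace SimpleGraph

variable {V : Type*} {G : SimpleGraph V}

lemma distToSet_le {v x : V} {P : Set V} (hx : x ∈ P) : distToSet G v P ≤ G.dist v x :=
  Nat.sInf_le ⟨x, hx, rfl⟩

lemma exists_dist_eq_distToSet (v : V) {P : Set V} (hP : P.Nonempty) :
    ∃ x ∈ P, G.dist v x = distToSet G v P :=
  Nat.sInf_mem (hP.image _)

@[simp] lemma distToSet_empty (v : V) : distToSet G v ∅ = 0 := by
  simp [distToSet]

@[simp] lemma distToSet_singleton (v a : V) : distToSet G v {a} = G.dist v a := by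
  simp [distToSet]

@[simp] lemma distToSet_univ (v : V) : distToSet G v Set.univ = 0 :=
  Nat.eq_zero_of_le_zero <| (distToSet_le (Set.mem_univ v)).trans_eq dist_self

lemma partitionDim_le_card_of_fibers {β : Type*} [Finite β] (f : V → β)
    (hf : ∀ u v, u ≠ v → ∃ b, distToSet G u (f ⁻¹' {b}) ≠ distToSet G v (f ⁻¹' {b})) :
    partitionDim G ≤ Nat.card β := by
  classical
  set Pi := (Setoid.finite_classes_ker f).toFinset
  have hPi : IsResolvingPartition G ↑Pi := by
    refine ⟨by simpa [Pi] using Setoid.isPartition_classes _, fun u v huv ↦ ?_⟩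
    obtain ⟨b, hb⟩ := hf u v huv
    -- an empty fiber separates nothing, since every distance to `∅` is `0`
    obtain ⟨w, rfl⟩ : ∃ w, f w = b := by
      by_contra! h
      simp [Set.preimage_singleton_eq_empty.mpr (by simpa using h)] at hb
    refine ⟨f ⁻¹' {f w}, ?_, hb⟩
    simp only [Pi, Set.Finite.coe_toFinset]
    exact ⟨w, by ext x; simp [Setoid.ker_def]⟩
  calc partitionDim G ≤ Pi.card := Nat.sInf_le ⟨Pi, rfl, hPi⟩
    _ = (Setoid.ker f).classes.ncard := (Set.ncard_eq_toFinset_card _ _).symm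
    _ ≤ (Set.range fun b ↦ f ⁻¹' {b}).ncard :=
        Set.ncard_le_ncard (Setoid.classes_ker_subset_fiber_set f) (Set.finite_range _)
    _ ≤ Nat.card β := by
        rw [← Set.image_univ]
        exact (Set.ncard_image_le Set.finite_univ).trans_eq (Set.ncard_univ β)

lemma isResolvingSet_compl_singleton (hG : G.Connected) (w : V) : IsResolvingSet G {w}ᶜ := by
  intro u v huv
  by_cases hu : u = w
  · subst hu
    exact ⟨v, Ne.symm huv, by simpa using (hG.pos_dist_of_ne huv).ne'⟩
  · exact ⟨u, hu, by simpa using (hG.pos_dist_of_ne huv.symm).ne⟩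

lemma exists_isResolvingSet_card_eq_metricDim [Fintype V] (hG : G.Connected) :
    ∃ S : Finset V, S.card = metricDim G ∧ IsResolvingSet G ↑S ∧ (↑S : Set V)ᶜ.Nonempty := by
  classical
  obtain ⟨w⟩ := hG.nonempty
  have hw : IsResolvingSet G ↑(Finset.univ.erase w) := by
    simpa [Set.compl_eq_univ_sdiff] using isResolvingSet_compl_singleton hG w
  obtain ⟨S, hcard, hS⟩ : metricDim G ∈ {n | ∃ S : Finset V, S.card = n ∧ IsResolvingSet G ↑S} :=
    Nat.sInf_mem ⟨_, _, rfl, hw⟩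
  have hle : metricDim G ≤ (Finset.univ.erase w).card := Nat.sInf_le ⟨_, rfl, hw⟩
  have hlt : S.card < Finset.univ.card :=
    hcard ▸ hle.trans_lt (Finset.card_erase_lt_of_mem (Finset.mem_univ w))
  obtain ⟨c, -, hc⟩ := Finset.exists_mem_notMem_of_card_lt_card hlt
  exact ⟨S, hcard, hS, c, hc⟩

section boxProd

variable {W : Type*} {H : SimpleGraph W}

lemma Connected.dist_boxProd (hG : G.Connected) (hH : H.Connected) (x y : V × W) :
    (G.boxProd H).dist x y = G.dist x.1 y.1 + H.dist x.2 y.2 := by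
  simp only [SimpleGraph.dist, edist_boxProd]
  exact ENat.toNat_add (edist_ne_top_iff_reachable.mpr (hG.preconnected _ _))
    (edist_ne_top_iff_reachable.mpr (hH.preconnected _ _))

lemma distToSet_boxProd_prod (hG : G.Connected) (hH : H.Connected) (v : V × W) {T : Set V}
    {U : Set W} (hT : T.Nonempty) (hU : U.Nonempty) :
    distToSet (G.boxProd H) v (T ×ˢ U) = distToSet G v.1 T + distToSet H v.2 U := by
  obtain ⟨a, ha, hda⟩ := exists_dist_eq_distToSet (G := G) v.1 hT
  obtain ⟨b, hb, hdb⟩ := exists_dist_eq_distToSet (G := H) v.2 hU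
  refine le_antisymm ?_ ?_
  · calc _ ≤ (G.boxProd H).dist v (a, b) := distToSet_le (Set.mk_mem_prod ha hb)
      _ = _ := by rw [hG.dist_boxProd hH, hda, hdb]
  · obtain ⟨⟨p, q⟩, ⟨hp, hq⟩, hd⟩ := exists_dist_eq_distToSet (G := G.boxProd H) v (hT.prod hU)
    rw [← hd, hG.dist_boxProd hH]
    exact add_le_add (distToSet_le hp) (distToSet_le hq)

end boxProd

section boxProdLabel

variable {V₁ V₂ : Type*} {G₁ : SimpleGraph V₁} {G₂ : SimpleGraph V₂} (S₁ : Finset V₁)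
  (S₂ : Finset V₂)

open Classical in
noncomputable def boxProdLabel (x : V₁ × V₂) : Option (S₁ ⊕ S₂) :=
  if h₁ : x.1 ∈ S₁ then some (.inl ⟨x.1, h₁⟩)
  else if h₂ : x.2 ∈ S₂ then some (.inr ⟨x.2, h₂⟩) else none

lemma boxProdLabel_preimage_inl (s : S₁) :
    boxProdLabel S₁ S₂ ⁻¹' {some (.inl s)} = {(s : V₁)} ×ˢ Set.univ := by
  obtain ⟨s, hs⟩ := s
  ext ⟨p, q⟩
  simp only [boxProdLabel, Set.mem_preimage, Set.mem_singleton_iff, Set.mem_prod]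
  split_ifs <;> grind

lemma boxProdLabel_preimage_inr (t : S₂) :
    boxProdLabel S₁ S₂ ⁻¹' {some (.inr t)} = (↑S₁ : Set V₁)ᶜ ×ˢ {(t : V₂)} := by
  obtain ⟨t, ht⟩ := t
  ext ⟨p, q⟩
  simp only [boxProdLabel, Set.mem_preimage, Set.mem_singleton_iff, Set.mem_prod]
  split_ifs <;> grind

variable {S₁ S₂}

lemma boxProdLabel_resolves (hG₁ : G₁.Connected) (hG₂ : G₂.Connected)
    (hR₁ : IsResolvingSet G₁ ↑S₁) (hR₂ : IsResolvingSet G₂ ↑S₂) (hS₁ : (↑S₁ : Set V₁)ᶜ.Nonempty)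
    (u v : V₁ × V₂) (huv : u ≠ v) :
    ∃ b, distToSet (G₁.boxProd G₂) u (boxProdLabel S₁ S₂ ⁻¹' {b}) ≠
      distToSet (G₁.boxProd G₂) v (boxProdLabel S₁ S₂ ⁻¹' {b}) := by
  obtain ⟨p, q⟩ := u
  obtain ⟨p', q'⟩ := v
  have := hG₂.nonempty
  by_cases hp : p = p'
  · subst hp
    obtain ⟨t, ht, hd⟩ := hR₂ q q' (by rintro rfl; exact huv rfl)
    refine ⟨some (.inr ⟨t, ht⟩), ?_⟩
    simpa [boxProdLabel_preimage_inr,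
      distToSet_boxProd_prod hG₁ hG₂ _ hS₁ (Set.singleton_nonempty _)] using hd
  · obtain ⟨s, hs, hd⟩ := hR₁ p p' hp
    refine ⟨some (.inl ⟨s, hs⟩), ?_⟩
    simpa [boxProdLabel_preimage_inl,
      distToSet_boxProd_prod hG₁ hG₂ _ (Set.singleton_nonempty _) Set.univ_nonempty] using hd

lemma partitionDim_boxProd_le (hG₁ : G₁.Connected) (hG₂ : G₂.Connected)
    (hR₁ : IsResolvingSet G₁ ↑S₁) (hR₂ : IsResolvingSet G₂ ↑S₂) (hS₁ : (↑S₁ : Set V₁)ᶜ.Nonempty) :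
    partitionDim (G₁.boxProd G₂) ≤ S₁.card + S₂.card + 1 :=
  (partitionDim_le_card_of_fibers _ (boxProdLabel_resolves hG₁ hG₂ hR₁ hR₂ hS₁)).trans_eq
    (by simp)

end boxProdLabel

end SimpleGraph

theorem stmt_7 {V₁ V₂ : Type*} [Fintype V₁] [Fintype V₂]
    (G₁ : SimpleGraph V₁) (G₂ : SimpleGraph V₂)
    (hG₁ : G₁.Connected) (hG₂ : G₂.Connected) :
    partitionDim (G₁.boxProd G₂) ≤ metricDim G₁ + metricDim G₂ + 1 := by
  obtain ⟨S₁, hS₁, hR₁, hc₁⟩ := exists_isResolvingSet_card_eq_metricDim hG₁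
  obtain ⟨S₂, hS₂, hR₂, -⟩ := exists_isResolvingSet_card_eq_metricDim hG₂
  rw [← hS₁, ← hS₂]
  exact partitionDim_boxProd_le hG₁ hG₂ hR₁ hR₂ hc₁
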